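/- Additivity of the asymptotic geometric measure for non-negative states: let ρ be an N-partite density matrix on ⊗_{j=1}^N ℂ^{d_j} all of whose entries in the computational product basis are non-negative real numbers. Then for every positive integer n, Λ²(ρ^{⊗n}) = (Λ²(ρ))^n; consequently the asymptotic geometric measure G^∞(ρ) = lim_{n→∞} (1/n) G(ρ^{⊗n}) exists and equals G(ρ). -/

import Mathlib

open scoped BigOperators ComplexOrder

namespace Paper

/-- `a` is an ℓ²-normalized (unit) vector. -/
def IsUnitVec {n : Type*} [Fintype n] (a : n → ℂ) : Prop :=
  ∑ x, ‖a x‖ ^ 2 = 1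

/-- A density matrix: positive semidefinite with trace 1. -/
def IsDensityMatrix {n : Type*} [Fintype n] (ρ : Matrix n n ℂ) : Prop :=
  ρ.PosSemidef ∧ ρ.trace = 1

/-- ⟨φ|ρ|φ⟩ (its real part). -/
noncomputable def overlap {n : Type*} [Fintype n] (ρ : Matrix n n ℂ) (φ : n → ℂ) : ℝ :=
  (dotProduct (star φ) (ρ.mulVec φ)).re

/-- The product vector a_1 ⊗ ⋯ ⊗ a_N. -/
def prodVec {N : ℕ} {ι : Fin N → Type*} (a : ∀ j, ι j → ℂ) : (∀ j, ι j) → ℂ :=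
  fun i => ∏ j, a j (i j)

/-- Λ²(ρ): the maximal overlap of ρ with product vectors. -/
noncomputable def maxOverlap {N : ℕ} {ι : Fin N → Type*} [∀ j, Fintype (ι j)]
    (ρ : Matrix (∀ j, ι j) (∀ j, ι j) ℂ) : ℝ :=
  sSup {r : ℝ | ∃ a : ∀ j, ι j → ℂ, (∀ j, IsUnitVec (a j)) ∧ r = overlap ρ (prodVec a)}

/-- The geometric measure of entanglement G(ρ) = −log₂ Λ²(ρ). -/
noncomputable def gm {N : ℕ} {ι : Fin N → Type*} [∀ j, Fintype (ι j)]
    (ρ : Matrix (∀ j, ι j) (∀ j, ι j) ℂ) : ℝ :=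
  -Real.logb 2 (maxOverlap ρ)

/-- ρ has non-negative (real) entries in the computational basis. -/
def IsNonnegMatrix {n : Type*} (ρ : Matrix n n ℂ) : Prop :=
  ∀ i i', 0 ≤ (ρ i i').re ∧ (ρ i i').im = 0

/-- The tensor product ρ ⊗ σ regarded as N-partite by grouping corresponding parties. -/
def tensorGrouped {N : ℕ} {ι κ : Fin N → Type*}
    (ρ : Matrix (∀ j, ι j) (∀ j, ι j) ℂ) (σ : Matrix (∀ j, κ j) (∀ j, κ j) ℂ) :
    Matrix (∀ j, ι j × κ j) (∀ j, ι j × κ j) ℂ :=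
  fun i i' => ρ (fun j => (i j).1) (fun j => (i' j).1) * σ (fun j => (i j).2) (fun j => (i' j).2)

/-- The n-fold tensor power ρ^{⊗n} regarded as N-partite by grouping the n copies of each party. -/
def tensorPow {N : ℕ} {ι : Fin N → Type*}
    (ρ : Matrix (∀ j, ι j) (∀ j, ι j) ℂ) (n : ℕ) :
    Matrix (∀ j, Fin n → ι j) (∀ j, Fin n → ι j) ℂ :=
  fun i i' => ∏ k, ρ (fun j => i j k) (fun j => i' j k)
set_option linter.unusedSectionVars false
set_option linter.unusedVariables false
set_option maxHeartbeats 1000000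
section Aux
-- the complex sesquilinear form
noncomputable def qform {n : Type*} [Fintype n] (ρ : Matrix n n ℂ) (φ ψ : n → ℂ) : ℂ :=
  dotProduct (star φ) (ρ.mulVec ψ)

lemma qform_expand {n : Type*} [Fintype n] (ρ : Matrix n n ℂ) (φ ψ : n → ℂ) :
    qform ρ φ ψ = ∑ i, ∑ i', star (φ i) * (ρ i i' * ψ i') := by
  simp [qform, dotProduct, Matrix.mulVec, Finset.mul_sum]

lemma overlap_eq_qform_re {n : Type*} [Fintype n] (ρ : Matrix n n ℂ) (φ : n → ℂ) :
    overlap ρ φ = (qform ρ φ φ).re := rfl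

lemma qform_self_eq_re {n : Type*} [Fintype n] {ρ : Matrix n n ℂ} (h : ρ.PosSemidef)
    (φ : n → ℂ) : qform ρ φ φ = ((overlap ρ φ : ℝ) : ℂ) := by
  have h2 := h.dotProduct_mulVec_nonneg φ
  rw [Complex.le_def] at h2
  exact Complex.ext rfl h2.2.symm

lemma overlap_nonneg {n : Type*} [Fintype n] {ρ : Matrix n n ℂ} (h : ρ.PosSemidef)
    (φ : n → ℂ) : 0 ≤ overlap ρ φ := by
  have h2 := h.dotProduct_mulVec_nonneg φ
  rw [Complex.le_def] at h2
  simpa [overlap] using h2.1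

lemma cauchy_schwarz {n : Type*} [Fintype n] {T : Matrix n n ℂ} (hT : T.PosSemidef)
    (w w' : n → ℂ) :
    ‖qform T w w'‖ ≤ Real.sqrt (overlap T w) * Real.sqrt (overlap T w') := by
  obtain ⟨A, rfl⟩ : ∃ A : Matrix n n ℂ, T = A.conjTranspose * A := by
    classical
    open scoped MatrixOrder in
    exact CStarAlgebra.nonneg_iff_eq_star_mul_self.mp hT.nonneg
  have key : ∀ u v : n → ℂ, qform (A.conjTranspose * A) u v =
      dotProduct (star (A.mulVec u)) (A.mulVec v) := by
    intro u v
    rw [qform, ← Matrix.mulVec_mulVec, Matrix.dotProduct_mulVec, Matrix.star_mulVec]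
  have hin : ∀ u v : n → ℂ, dotProduct (star u) v
      = (inner ℂ ((WithLp.equiv 2 (n → ℂ)).symm u) ((WithLp.equiv 2 (n → ℂ)).symm v) : ℂ) := by
    intro u v
    simp [dotProduct, PiLp.inner_apply, RCLike.inner_apply, mul_comm]
  have hnorm : ∀ u : n → ℂ, Real.sqrt (overlap (A.conjTranspose * A) u)
      = ‖(WithLp.equiv 2 (n → ℂ)).symm (A.mulVec u)‖ := by
    intro u
    rw [overlap_eq_qform_re, key, EuclideanSpace.norm_eq]
    congr 1
    simp only [dotProduct, Pi.star_apply, Complex.add_re, Complex.re_sum,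
      Complex.sq_norm]
    refine Finset.sum_congr rfl fun x _ => ?_
    simp [Complex.normSq_apply, Complex.mul_re]
  rw [key, hin, hnorm, hnorm]
  exact norm_inner_le_norm _ _




section OSet
variable {N : ℕ} {ι : Fin N → Type*} [∀ j, Fintype (ι j)]

def oSet (ρ : Matrix (∀ j, ι j) (∀ j, ι j) ℂ) : Set ℝ :=
  {r : ℝ | ∃ a : ∀ j, ι j → ℂ, (∀ j, IsUnitVec (a j)) ∧ r = overlap ρ (prodVec a)}

lemma maxOverlap_eq_sSup (ρ : Matrix (∀ j, ι j) (∀ j, ι j) ℂ) :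
    maxOverlap ρ = sSup (oSet ρ) := rfl

lemma norm_le_one_of_unit {n : Type*} [Fintype n] {a : n → ℂ} (h : IsUnitVec a) (x : n) :
    ‖a x‖ ≤ 1 := by
  have h1 : ‖a x‖ ^ 2 ≤ 1 := by
    rw [← h]
    exact Finset.single_le_sum (f := fun x => ‖a x‖ ^ 2)
      (fun i _ => sq_nonneg _) (Finset.mem_univ x)
  nlinarith [norm_nonneg (a x)]

lemma prodVec_norm_le_one {a : ∀ j, ι j → ℂ} (h : ∀ j, IsUnitVec (a j)) (i : ∀ j, ι j) :
    ‖prodVec a i‖ ≤ 1 := by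
  rw [prodVec, norm_prod]
  exact Finset.prod_le_one (fun j _ => norm_nonneg _)
    (fun j _ => norm_le_one_of_unit (h j) (i j))

lemma bddAbove_oSet (ρ : Matrix (∀ j, ι j) (∀ j, ι j) ℂ) : BddAbove (oSet ρ) := by
  refine ⟨∑ i, ∑ i', ‖ρ i i'‖, ?_⟩
  rintro r ⟨a, ha, rfl⟩
  calc overlap ρ (prodVec a) ≤ ‖qform ρ (prodVec a) (prodVec a)‖ := by
        rw [overlap_eq_qform_re]; exact Complex.re_le_norm _
    _ ≤ ∑ i, ∑ i', ‖ρ i i'‖ := by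
        rw [qform_expand]
        refine (norm_sum_le _ _).trans (Finset.sum_le_sum fun i _ => ?_)
        refine (norm_sum_le _ _).trans (Finset.sum_le_sum fun i' _ => ?_)
        rw [norm_mul, norm_mul, norm_star]
        calc ‖prodVec a i‖ * (‖ρ i i'‖ * ‖prodVec a i'‖)
            ≤ 1 * (‖ρ i i'‖ * 1) := by
              refine mul_le_mul (prodVec_norm_le_one ha i)
                (mul_le_mul_of_nonneg_left (prodVec_norm_le_one ha i') (norm_nonneg _))
                (by positivity) zero_le_one
          _ = ‖ρ i i'‖ := by ring

lemma oSet_nonempty [∀ j, Nonempty (ι j)] (ρ : Matrix (∀ j, ι j) (∀ j, ι j) ℂ) :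
    (oSet ρ).Nonempty := by
  classical
  refine ⟨_, fun j x => if x = Classical.arbitrary (ι j) then 1 else 0, fun j => ?_, rfl⟩
  rw [IsUnitVec, Finset.sum_eq_single (Classical.arbitrary (ι j))]
  · simp
  · intro b _ hb; simp [hb]
  · simp

lemma overlap_le_maxOverlap (ρ : Matrix (∀ j, ι j) (∀ j, ι j) ℂ)
    {a : ∀ j, ι j → ℂ} (ha : ∀ j, IsUnitVec (a j)) :
    overlap ρ (prodVec a) ≤ maxOverlap ρ :=
  le_csSup (bddAbove_oSet ρ) ⟨a, ha, rfl⟩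

lemma maxOverlap_nonneg [∀ j, Nonempty (ι j)] {ρ : Matrix (∀ j, ι j) (∀ j, ι j) ℂ}
    (h : ρ.PosSemidef) : 0 ≤ maxOverlap ρ := by
  obtain ⟨r, a, ha, rfl⟩ := oSet_nonempty ρ
  exact (overlap_nonneg h _).trans (overlap_le_maxOverlap ρ ha)

lemma overlap_smul {n : Type*} [Fintype n] (ρ : Matrix n n ℂ) (t : ℂ) (φ : n → ℂ) :
    overlap ρ (t • φ) = ‖t‖ ^ 2 * overlap ρ φ := by
  rw [overlap_eq_qform_re, overlap_eq_qform_re, qform_expand, qform_expand]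
  have : ∑ i, ∑ i', star ((t • φ) i) * (ρ i i' * (t • φ) i')
      = (star t * t) * ∑ i, ∑ i', star (φ i) * (ρ i i' * φ i') := by
    rw [Finset.mul_sum]
    refine Finset.sum_congr rfl fun i _ => ?_
    rw [Finset.mul_sum]
    refine Finset.sum_congr rfl fun i' _ => ?_
    simp [Pi.smul_apply, smul_eq_mul]; ring
  have h1 : star t * t = ((‖t‖ ^ 2 : ℝ) : ℂ) := by
    rw [Complex.star_def, mul_comm, Complex.mul_conj']
    norm_cast
  rw [this, h1, Complex.re_ofReal_mul]

lemma prodVec_smul (r : ∀ j, ℂ) (u : ∀ j, ι j → ℂ) :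
    prodVec (fun j => r j • u j) = (∏ j, r j) • prodVec u := by
  funext i
  simp [prodVec, Finset.prod_mul_distrib]

/-- Scaled fundamental bound: for arbitrary (not necessarily unit) vectors. -/
lemma overlap_prodVec_le [∀ j, Nonempty (ι j)] {ρ : Matrix (∀ j, ι j) (∀ j, ι j) ℂ}
    (h : ρ.PosSemidef) (u : ∀ j, ι j → ℂ) :
    overlap ρ (prodVec u) ≤ maxOverlap ρ * ∏ j, (∑ x, ‖u j x‖ ^ 2) := by
  classical
  by_cases hz : ∀ j, (∑ x, ‖u j x‖ ^ 2) ≠ 0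
  · set r : ∀ j, ℝ := fun j => Real.sqrt (∑ x, ‖u j x‖ ^ 2) with hr
    have hrpos : ∀ j, 0 < r j := fun j => Real.sqrt_pos.mpr
      (lt_of_le_of_ne (Finset.sum_nonneg fun x _ => sq_nonneg _) (Ne.symm (hz j)))
    set a : ∀ j, ι j → ℂ := fun j x => ((r j : ℝ) : ℂ)⁻¹ * u j x with hadef
    have ha : ∀ j, IsUnitVec (a j) := by
      intro j
      rw [IsUnitVec]
      have : ∀ x, ‖a j x‖ ^ 2 = (r j)⁻¹ ^ 2 * ‖u j x‖ ^ 2 := by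
        intro x
        rw [hadef]
        simp [norm_mul, mul_pow]
      simp_rw [this, ← Finset.mul_sum]
      rw [hr]
      rw [inv_pow, Real.sq_sqrt (Finset.sum_nonneg fun x _ => sq_nonneg _)]
      exact inv_mul_cancel₀ (hz _)
    have hu : prodVec u = (∏ j, ((r j : ℝ) : ℂ)) • prodVec a := by
      have : u = fun j => ((r j : ℝ) : ℂ) • a j := by
        funext j x
        rw [hadef]
        simp [Pi.smul_apply, smul_eq_mul, ← mul_assoc,
          mul_inv_cancel₀ (Complex.ofReal_ne_zero.mpr (hrpos j).ne')]
      conv_lhs => rw [this]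
      exact prodVec_smul _ _
    rw [hu, overlap_smul]
    have hnorm : ‖∏ j, ((r j : ℝ) : ℂ)‖ ^ 2 = ∏ j, (∑ x, ‖u j x‖ ^ 2) := by
      rw [norm_prod]
      rw [← Finset.prod_pow]
      refine Finset.prod_congr rfl fun j _ => ?_
      rw [Complex.norm_real, Real.norm_eq_abs, sq_abs, hr,
        Real.sq_sqrt (Finset.sum_nonneg fun x _ => sq_nonneg _)]
    rw [hnorm, mul_comm]
    exact mul_le_mul_of_nonneg_right (overlap_le_maxOverlap ρ ha)
      (Finset.prod_nonneg fun j _ => Finset.sum_nonneg fun x _ => sq_nonneg _)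
  · push_neg at hz
    obtain ⟨j0, hj0⟩ := hz
    have hu0 : ∀ x, u j0 x = 0 := by
      intro x
      have := (Finset.sum_eq_zero_iff_of_nonneg (fun x _ => sq_nonneg ‖u j0 x‖)).mp hj0 x
        (Finset.mem_univ x)
      simpa [pow_eq_zero_iff] using this
    have hpv : prodVec u = 0 := by
      funext i
      rw [prodVec]
      exact Finset.prod_eq_zero (Finset.mem_univ j0) (hu0 (i j0))
    rw [hpv]
    have h0 : overlap ρ (0 : (∀ j, ι j) → ℂ) = 0 := by
      simp [overlap, Matrix.mulVec]
    rw [h0]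
    have : (∏ j, (∑ x, ‖u j x‖ ^ 2)) = 0 := Finset.prod_eq_zero (Finset.mem_univ j0) hj0
    rw [this, mul_zero]
end OSet

section TP

variable {N : ℕ} {ι : Fin N → Type*} [∀ j, Fintype (ι j)] [∀ j, DecidableEq (ι j)]

lemma tensorPow_mul (A B : Matrix (∀ j, ι j) (∀ j, ι j) ℂ) (n : ℕ) :
    tensorPow (A * B) n = tensorPow A n * tensorPow B n := by
  funext i i'
  rw [tensorPow, Matrix.mul_apply]
  simp_rw [Matrix.mul_apply]
  rw [Fintype.prod_sum]
  refine Fintype.sum_equiv (Equiv.piComm fun (k : Fin n) (j : Fin N) => ι j) _ _ fun x => ?_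
  rw [tensorPow, tensorPow, ← Finset.prod_mul_distrib]
  rfl

lemma tensorPow_conjTranspose (B : Matrix (∀ j, ι j) (∀ j, ι j) ℂ) (n : ℕ) :
    tensorPow B.conjTranspose n = (tensorPow B n).conjTranspose := by
  funext i i'
  rw [Matrix.conjTranspose_apply, tensorPow, tensorPow, star_prod]
  rfl

lemma tensorPow_posSemidef {ρ : Matrix (∀ j, ι j) (∀ j, ι j) ℂ} (h : ρ.PosSemidef) (n : ℕ) :
    (tensorPow ρ n).PosSemidef := by
  obtain ⟨B, rfl⟩ : ∃ B : Matrix (∀ j, ι j) (∀ j, ι j) ℂ, ρ = B.conjTranspose * B := by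
    open scoped MatrixOrder in
    exact CStarAlgebra.nonneg_iff_eq_star_mul_self.mp h.nonneg
  rw [tensorPow_mul, tensorPow_conjTranspose]
  exact Matrix.posSemidef_conjTranspose_mul_self _

end TP

end Aux

section Key
variable {N : ℕ} {ι : Fin N → Type*} [∀ j, Fintype (ι j)] [∀ j, DecidableEq (ι j)]

/-- The equivalence splitting off the first copy of each party. -/
def consPiEquiv (n : ℕ) :
    ((∀ j, ι j) × (∀ j, Fin n → ι j)) ≃ (∀ j, Fin (n + 1) → ι j) where
  toFun p := fun j => Fin.cons (p.1 j) (p.2 j)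
  invFun f := (fun j => f j 0, fun j k => f j k.succ)
  left_inv := by
    rintro ⟨i, g⟩
    refine Prod.ext ?_ ?_ <;> funext j
    · simp
    · funext k; simp
  right_inv := by
    intro f
    funext j
    exact Fin.cons_self_tail (f j)

lemma star_mul_self_re (z : ℂ) : (star z * z).re = ‖z‖ ^ 2 := by
  rw [Complex.star_def, mul_comm, Complex.mul_conj']
  norm_cast

lemma cons_sum_sq {α : Type*} [Fintype α] [DecidableEq α] {n : ℕ}
    (c : (Fin (n + 1) → α) → ℂ) :
    ∑ x : α, ∑ g : Fin n → α, ‖c (Fin.cons x g)‖ ^ 2 = ∑ f, ‖c f‖ ^ 2 := by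
  have h1 : ∑ p : α × (Fin n → α), ‖c (Fin.cons p.1 p.2)‖ ^ 2 = ∑ f, ‖c f‖ ^ 2 :=
    Fintype.sum_equiv (Fin.consEquiv fun _ => α) _ _ fun p => rfl
  rw [← h1, Fintype.sum_prod_type]

lemma key_bound [∀ j, Nonempty (ι j)]
    {ρ : Matrix (∀ j, ι j) (∀ j, ι j) ℂ} (hpsd : ρ.PosSemidef)
    (hρn : IsNonnegMatrix ρ) :
    ∀ n : ℕ, ∀ c : ∀ j, (Fin n → ι j) → ℂ,
      overlap (tensorPow ρ n) (prodVec c)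
        ≤ maxOverlap ρ ^ n * ∏ j, (∑ x, ‖c j x‖ ^ 2) := by
  intro n
  induction n with
  | zero =>
    intro c
    have h1 : overlap (tensorPow ρ 0) (prodVec c) = ∏ j, ‖c j default‖ ^ 2 := by
      rw [overlap_eq_qform_re, qform_expand, Fintype.sum_unique, Fintype.sum_unique]
      have hT : tensorPow ρ 0 (default : ∀ j, Fin 0 → ι j) default = 1 := by
        simp [tensorPow]
      rw [hT, one_mul, star_mul_self_re, prodVec, norm_prod, ← Finset.prod_pow]
      exact Finset.prod_congr rfl fun j _ => by congr 1
    rw [h1, pow_zero, one_mul]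
    refine le_of_eq (Finset.prod_congr rfl fun j _ => ?_)
    rw [Fintype.sum_unique]
  | succ n IH =>
    intro c
    set M := maxOverlap ρ with hM
    have hM0 : 0 ≤ M := maxOverlap_nonneg hpsd
    set T := tensorPow ρ n with hT
    have hTpsd : T.PosSemidef := tensorPow_posSemidef hpsd n
    set w : (∀ j, ι j) → ∀ j, (Fin n → ι j) → ℂ :=
      fun i j g => c j (Fin.cons (i j) g) with hw
    set s : ∀ j, ι j → ℝ := fun j x => ∑ g : Fin n → ι j, ‖c j (Fin.cons x g)‖ ^ 2 with hs
    have hs0 : ∀ j x, 0 ≤ s j x := fun j x => Finset.sum_nonneg fun g _ => sq_nonneg _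
    set E := consPiEquiv (ι := ι) n with hE
    -- pointwise identity
    have hF : ∀ (i i' : ∀ j, ι j) (g g' : ∀ j, Fin n → ι j),
        star (prodVec c (E (i, g))) *
            (tensorPow ρ (n + 1) (E (i, g)) (E (i', g')) * prodVec c (E (i', g')))
          = ρ i i' * (star (prodVec (w i) g) * (T g g' * prodVec (w i') g')) := by
      intro i i' g g'
      have h1 : prodVec c (E (i, g)) = prodVec (w i) g := rfl
      have h2 : prodVec c (E (i', g')) = prodVec (w i') g' := rfl
      have h3 : tensorPow ρ (n + 1) (E (i, g)) (E (i', g')) = ρ i i' * T g g' := by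
        rw [hT]
        simp [tensorPow, hE, consPiEquiv, Fin.prod_univ_succ]
      rw [h1, h2, h3]; ring
    -- Claim 1 : decomposition of the quadratic form
    have claim1 : qform (tensorPow ρ (n + 1)) (prodVec c) (prodVec c)
        = ∑ i : ∀ j, ι j, ∑ i' : ∀ j, ι j,
            ρ i i' * qform T (prodVec (w i)) (prodVec (w i')) := by
      rw [qform_expand]
      rw [← Fintype.sum_equiv E
        (fun p => ∑ f', star (prodVec c (E p)) *
          (tensorPow ρ (n + 1) (E p) f' * prodVec c f')) _ (fun p => rfl)]
      have hinner : ∀ p : (∀ j, ι j) × (∀ j, Fin n → ι j),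
          (∑ f', star (prodVec c (E p)) *
            (tensorPow ρ (n + 1) (E p) f' * prodVec c f'))
          = ∑ q : (∀ j, ι j) × (∀ j, Fin n → ι j), star (prodVec c (E p)) *
            (tensorPow ρ (n + 1) (E p) (E q) * prodVec c (E q)) :=
        fun p => (Fintype.sum_equiv E _ _ fun q => rfl).symm
      simp_rw [hinner]
      rw [Fintype.sum_prod_type]
      refine Finset.sum_congr rfl fun i _ => ?_
      have : ∀ g : ∀ j, Fin n → ι j,
          (∑ q : (∀ j, ι j) × (∀ j, Fin n → ι j), star (prodVec c (E (i, g))) *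
            (tensorPow ρ (n + 1) (E (i, g)) (E q) * prodVec c (E q)))
          = ∑ i', ∑ g', ρ i i' * (star (prodVec (w i) g) * (T g g' * prodVec (w i') g')) := by
        intro g
        rw [Fintype.sum_prod_type]
        exact Finset.sum_congr rfl fun i' _ => Finset.sum_congr rfl fun g' _ => hF i i' g g'
      simp_rw [this]
      rw [Finset.sum_comm]
      refine Finset.sum_congr rfl fun i' _ => ?_
      rw [qform_expand, Finset.mul_sum]
      refine Finset.sum_congr rfl fun g _ => ?_
      rw [Finset.mul_sum]
    -- Claim 2 : take real parts, using that ρ has nonnegative entries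
    have claim2 : overlap (tensorPow ρ (n + 1)) (prodVec c)
        = ∑ i, ∑ i', (ρ i i').re * (qform T (prodVec (w i)) (prodVec (w i'))).re := by
      rw [overlap_eq_qform_re, claim1, Complex.re_sum]
      refine Finset.sum_congr rfl fun i _ => ?_
      rw [Complex.re_sum]
      refine Finset.sum_congr rfl fun i' _ => ?_
      rw [Complex.mul_re, (hρn i i').2, zero_mul, sub_zero]
    -- the square-root bound from the induction hypothesis
    set P : (∀ j, ι j) → ℝ := fun i => ∏ j, Real.sqrt (s j (i j)) with hP
    have hP0 : ∀ i, 0 ≤ P i := fun i => Finset.prod_nonneg fun j _ => Real.sqrt_nonneg _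
    have sqrtbound : ∀ i, Real.sqrt (overlap T (prodVec (w i))) ≤ Real.sqrt (M ^ n) * P i := by
      intro i
      have h1 : overlap T (prodVec (w i)) ≤ M ^ n * ∏ j, s j (i j) := IH (w i)
      have h2 : (∏ j, Real.sqrt (s j (i j))) ^ 2 = ∏ j, s j (i j) := by
        rw [← Finset.prod_pow]
        exact Finset.prod_congr rfl fun j _ => Real.sq_sqrt (hs0 j (i j))
      calc Real.sqrt (overlap T (prodVec (w i)))
          ≤ Real.sqrt (M ^ n * ∏ j, s j (i j)) := Real.sqrt_le_sqrt h1
        _ = Real.sqrt (M ^ n) * P i := by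
            rw [Real.sqrt_mul (pow_nonneg hM0 n), hP, ← h2,
              Real.sqrt_sq (Finset.prod_nonneg fun j _ => Real.sqrt_nonneg _)]
    have hsq : Real.sqrt (M ^ n) ^ 2 = M ^ n := Real.sq_sqrt (pow_nonneg hM0 n)
    -- termwise bound
    have term : ∀ i i' : ∀ j, ι j,
        (ρ i i').re * (qform T (prodVec (w i)) (prodVec (w i'))).re
          ≤ (ρ i i').re * (M ^ n * (P i * P i')) := by
      intro i i'
      refine mul_le_mul_of_nonneg_left ?_ (hρn i i').1
      calc (qform T (prodVec (w i)) (prodVec (w i'))).re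
          ≤ ‖qform T (prodVec (w i)) (prodVec (w i'))‖ :=
            Complex.re_le_norm _
        _ ≤ Real.sqrt (overlap T (prodVec (w i))) * Real.sqrt (overlap T (prodVec (w i'))) :=
            cauchy_schwarz hTpsd _ _
        _ ≤ (Real.sqrt (M ^ n) * P i) * (Real.sqrt (M ^ n) * P i') :=
            mul_le_mul (sqrtbound i) (sqrtbound i') (Real.sqrt_nonneg _)
              (by positivity)
        _ = Real.sqrt (M ^ n) ^ 2 * (P i * P i') := by ring
        _ = M ^ n * (P i * P i') := by rw [hsq]
    -- the auxiliary nonnegative product vector u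
    set u : ∀ j, ι j → ℂ := fun j x => ((Real.sqrt (s j x) : ℝ) : ℂ) with hu
    have hpe : ∀ i : ∀ j, ι j, prodVec u i = ((P i : ℝ) : ℂ) := by
      intro i
      simp only [prodVec, hu, hP, Complex.ofReal_prod]
    have hov : overlap ρ (prodVec u) = ∑ i, ∑ i', (ρ i i').re * (P i * P i') := by
      rw [overlap_eq_qform_re, qform_expand, Complex.re_sum]
      refine Finset.sum_congr rfl fun i _ => ?_
      rw [Complex.re_sum]
      refine Finset.sum_congr rfl fun i' _ => ?_
      rw [hpe, hpe]
      rw [show (star ((P i : ℝ) : ℂ)) * (ρ i i' * ((P i' : ℝ) : ℂ))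
          = ((P i * P i' : ℝ) : ℂ) * ρ i i' by
        rw [Complex.star_def, Complex.conj_ofReal]; push_cast; ring]
      rw [Complex.re_ofReal_mul]
      ring
    have husum : ∀ j, ∑ x, ‖u j x‖ ^ 2 = ∑ f, ‖c j f‖ ^ 2 := by
      intro j
      rw [← cons_sum_sq (c j)]
      refine Finset.sum_congr rfl fun x _ => ?_
      rw [hu]
      simp only [Complex.norm_real, Real.norm_eq_abs, sq_abs,
        Real.sq_sqrt (hs0 j x)]
      rfl
    calc overlap (tensorPow ρ (n + 1)) (prodVec c)
        = ∑ i, ∑ i', (ρ i i').re * (qform T (prodVec (w i)) (prodVec (w i'))).re := claim2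
      _ ≤ ∑ i, ∑ i', (ρ i i').re * (M ^ n * (P i * P i')) :=
          Finset.sum_le_sum fun i _ => Finset.sum_le_sum fun i' _ => term i i'
      _ = M ^ n * ∑ i, ∑ i', (ρ i i').re * (P i * P i') := by
          rw [Finset.mul_sum]
          refine Finset.sum_congr rfl fun i _ => ?_
          rw [Finset.mul_sum]
          exact Finset.sum_congr rfl fun i' _ => by ring
      _ = M ^ n * overlap ρ (prodVec u) := by rw [hov]
      _ ≤ M ^ n * (M * ∏ j, ∑ x, ‖u j x‖ ^ 2) :=
          mul_le_mul_of_nonneg_left (overlap_prodVec_le hpsd u) (pow_nonneg hM0 n)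
      _ = M ^ (n + 1) * ∏ j, ∑ f, ‖c j f‖ ^ 2 := by
          rw [Finset.prod_congr rfl fun j _ => husum j]
          ring

/-- the swap equivalence for tensor powers. -/
def pairSwapEquiv (n : ℕ) :
    (Fin n → ((∀ j, ι j) × (∀ j, ι j))) ≃ ((∀ j, Fin n → ι j) × (∀ j, Fin n → ι j)) where
  toFun q := (fun j k => (q k).1 j, fun j k => (q k).2 j)
  invFun P := fun k => (fun j => P.1 j k, fun j => P.2 j k)
  left_inv q := rfl
  right_inv P := rfl

/-- tensor powers of unit product vectors realize the `n`-th power of the overlap. -/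
lemma overlap_tensorPow_pow {ρ : Matrix (∀ j, ι j) (∀ j, ι j) ℂ} (hpsd : ρ.PosSemidef)
    (n : ℕ) (a : ∀ j, ι j → ℂ) :
    overlap (tensorPow ρ n) (prodVec fun j g => ∏ k, a j (g k))
      = (overlap ρ (prodVec a)) ^ n := by
  classical
  set b : ∀ j, (Fin n → ι j) → ℂ := fun j g => ∏ k, a j (g k) with hb
  set E := pairSwapEquiv (ι := ι) n with hE
  have hq : qform ρ (prodVec a) (prodVec a)
      = ∑ p : (∀ j, ι j) × (∀ j, ι j),
          star (prodVec a p.1) * (ρ p.1 p.2 * prodVec a p.2) := by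
    rw [qform_expand, Fintype.sum_prod_type]
  have hqT : qform (tensorPow ρ n) (prodVec b) (prodVec b)
      = ∑ P : (∀ j, Fin n → ι j) × (∀ j, Fin n → ι j),
          star (prodVec b P.1) * (tensorPow ρ n P.1 P.2 * prodVec b P.2) := by
    rw [qform_expand, Fintype.sum_prod_type]
  have key : qform (tensorPow ρ n) (prodVec b) (prodVec b)
      = (qform ρ (prodVec a) (prodVec a)) ^ n := by
    rw [hq, hqT, Fintype.sum_pow]
    refine (Fintype.sum_equiv E _ _ fun q => ?_).symm
    have h1 : prodVec b (E q).1 = ∏ k, prodVec a ((q k).1) := Finset.prod_comm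
    have h2 : prodVec b (E q).2 = ∏ k, prodVec a ((q k).2) := Finset.prod_comm
    have h3 : tensorPow ρ n (E q).1 (E q).2 = ∏ k, ρ ((q k).1) ((q k).2) := rfl
    rw [h1, h2, h3, star_prod, ← Finset.prod_mul_distrib, ← Finset.prod_mul_distrib]
  have hz := qform_self_eq_re hpsd (prodVec a)
  rw [overlap_eq_qform_re, key, hz, ← Complex.ofReal_pow, Complex.ofReal_re]

lemma unitVec_pow {α : Type*} [Fintype α] {a : α → ℂ} (h : IsUnitVec a) (n : ℕ) :
    IsUnitVec fun g : Fin n → α => ∏ k, a (g k) := by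
  rw [IsUnitVec]
  have : ∀ g : Fin n → α, ‖∏ k, a (g k)‖ ^ 2 = ∏ k, ‖a (g k)‖ ^ 2 := by
    intro g
    rw [norm_prod, ← Finset.prod_pow]
  simp_rw [this]
  rw [← Fintype.sum_pow (fun x => ‖a x‖ ^ 2) n, h, one_pow]

lemma maxOverlap_tensorPow [∀ j, Nonempty (ι j)]
    {ρ : Matrix (∀ j, ι j) (∀ j, ι j) ℂ} (hpsd : ρ.PosSemidef)
    (hρn : IsNonnegMatrix ρ) (n : ℕ) :
    maxOverlap (tensorPow ρ n) = maxOverlap ρ ^ n := by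
  classical
  have hM0 : 0 ≤ maxOverlap ρ := maxOverlap_nonneg hpsd
  apply le_antisymm
  · rw [maxOverlap_eq_sSup]
    refine csSup_le (oSet_nonempty _) ?_
    rintro r ⟨b, hb, rfl⟩
    have h := key_bound hpsd hρn n b
    have h1 : (∏ j, ∑ x, ‖b j x‖ ^ 2) = 1 := by
      rw [Finset.prod_congr rfl fun j _ => hb j, Finset.prod_const_one]
    rwa [h1, mul_one] at h
  · have hmono : Monotone fun x : ℝ => (max x 0) ^ n := fun x y h =>
      pow_le_pow_left₀ (le_max_right _ _) (max_le_max h le_rfl) n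
    have hcont : ContinuousAt (fun x : ℝ => (max x 0) ^ n) (sSup (oSet ρ)) :=
      ((continuous_id.max continuous_const).pow n).continuousAt
    have hmap := Monotone.map_csSup_of_continuousAt hcont hmono
      (oSet_nonempty ρ) (bddAbove_oSet ρ)
    have himg : ((fun x : ℝ => (max x 0) ^ n) '' oSet ρ) ⊆ oSet (tensorPow ρ n) := by
      rintro r ⟨r0, ⟨a, ha, rfl⟩, rfl⟩
      refine ⟨fun j g => ∏ k, a j (g k), fun j => unitVec_pow (ha j) n, ?_⟩
      show (max (overlap ρ (prodVec a)) 0) ^ n = _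
      rw [max_eq_left (overlap_nonneg hpsd _), ← overlap_tensorPow_pow hpsd n a]
    have : maxOverlap ρ ^ n = (fun x : ℝ => (max x 0) ^ n) (sSup (oSet ρ)) := by
      simp only [maxOverlap_eq_sSup]
      rw [max_eq_left]
      rw [← maxOverlap_eq_sSup]; exact hM0
    rw [maxOverlap_eq_sSup (tensorPow ρ n), this]
    show (sSup (oSet ρ) ⊔ 0) ^ n ≤ sSup (oSet (tensorPow ρ n))
    rw [hmap]
    exact csSup_le_csSup (bddAbove_oSet _)
      ((oSet_nonempty ρ).image _) himg

end Key

/-- **Additivity of the asymptotic geometric measure for non-negative states.**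
If all entries of the N-partite density matrix ρ in the computational product basis are
non-negative reals, then Λ²(ρ^{⊗n}) = (Λ²ρ)^n for every n ≥ 1, and consequently
G^∞(ρ) = lim_{n→∞} (1/n)·G(ρ^{⊗n}) exists and equals G(ρ). -/
theorem agm_eq_gm_of_nonneg {N : ℕ} (d : Fin N → ℕ)
    (ρ : Matrix (∀ j, Fin (d j)) (∀ j, Fin (d j)) ℂ)
    (hρ : IsDensityMatrix ρ) (hρn : IsNonnegMatrix ρ) :
    (∀ n : ℕ, 0 < n → maxOverlap (tensorPow ρ n) = (maxOverlap ρ) ^ n) ∧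
    Filter.Tendsto (fun n : ℕ => gm (tensorPow ρ n) / (n : ℝ)) Filter.atTop (nhds (gm ρ)) := by
  classical
  have hpsd : ρ.PosSemidef := hρ.1
  have hpi : Nonempty (∀ j, Fin (d j)) := by
    by_contra h
    rw [not_nonempty_iff] at h
    have htr := hρ.2
    rw [Matrix.trace] at htr
    simp at htr
  haveI : ∀ j, Nonempty (Fin (d j)) := fun j => ⟨hpi.some j⟩
  have part1 : ∀ n : ℕ, 0 < n → maxOverlap (tensorPow ρ n) = (maxOverlap ρ) ^ n :=
    fun n _ => maxOverlap_tensorPow hpsd hρn n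
  refine ⟨part1, ?_⟩
  have hev : ∀ᶠ n : ℕ in Filter.atTop, gm ρ = gm (tensorPow ρ n) / (n : ℝ) := by
    filter_upwards [Filter.eventually_gt_atTop 0] with n hn
    have hn' : (n : ℝ) ≠ 0 := Nat.cast_ne_zero.mpr hn.ne'
    simp only [gm]
    rw [part1 n hn, Real.logb_pow]
    field_simp
  exact Filter.Tendsto.congr' hev tendsto_const_nhds

end Paper
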